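/- arXiv:2508.15699 — 2 statements merged into one kernel-verified Lean document; each statement's English description precedes it below -/
import Mathlib

section
/- Let a : ℕ → ℂ be a sequence with a n ≠ 0 for all n and |a n| → ∞, and suppose there exist ε > 0 and Ψ ∈ [−π, π) such that no a n lies in the open sector S(Ψ, ε) := {r e^{iθ} : r > 0, θ ∈ (Ψ−ε, Ψ+ε) mod 2π}. Let A, B ∈ ℂ with A ≠ 0, and set λ n := A·a n + B; assume λ n ≠ 0 for all n. Then there exist Ψ′ ∈ [−π, π), ε′ > 0, and R > 0 such that: (1) no λ n lies in S(Ψ′, ε′); and (2) every z ∈ S(Ψ′, ε′) with |z| ≥ R can be written as z = A·w + B with w ∈ S(Ψ, ε). -/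
open Complex Filter Set MeasureTheory Asymptotics

noncomputable section

/-- Branch of the logarithm with imaginary part in `(Ψ - 2π, Ψ]`. -/
def logPsi (Ψ : ℝ) (w : ℂ) : ℂ :=
  Complex.log (w * Complex.exp (-((Ψ - Real.pi : ℝ) : ℂ) * Complex.I)) +
    ((Ψ - Real.pi : ℝ) : ℂ) * Complex.I

/-- `w ^ s` with branch cut along the ray of angle `Ψ`. -/
def cpowPsi (Ψ : ℝ) (w s : ℂ) : ℂ := Complex.exp (s * logPsi Ψ w)

/-- The open sector of half-opening `ε` around the ray of angle `Ψ` (arguments mod 2π). -/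
def sector (Ψ ε : ℝ) : Set ℂ :=
  {z | ∃ r θ : ℝ, 0 < r ∧ θ ∈ Set.Ioo (Ψ - ε) (Ψ + ε) ∧
    z = (r : ℂ) * Complex.exp ((θ : ℂ) * Complex.I)}

/-- Branch of the logarithm holomorphic on the sector around the angle `Ψ`,
with imaginary part in `(Ψ - π, Ψ + π]`. -/
def logSector (Ψ : ℝ) (z : ℂ) : ℂ :=
  Complex.log (z * Complex.exp (-(Ψ : ℂ) * Complex.I)) + (Ψ : ℂ) * Complex.I

/-- `z ^ β` using the sector branch of the logarithm. -/
def cpowSector (Ψ : ℝ) (z β : ℂ) : ℂ := Complex.exp (β * logSector Ψ z)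

/-- The filter `|z| → ∞` within the sector. -/
def atInfSector (Ψ ε : ℝ) : Filter ℂ :=
  Filter.comap (fun z : ℂ => ‖z‖) Filter.atTop ⊓ Filter.principal (sector Ψ ε)

/-- A sequence (indexed from 1) is admissible with exponent of convergence `α`. -/
structure Admissible (a : ℕ → ℂ) (α : ℝ) : Prop where
  abs_pos : 0 < ‖a 1‖
  abs_mono : ∀ n, 1 ≤ n → ‖a n‖ ≤ ‖a (n + 1)‖
  abs_tendsto : Filter.Tendsto (fun n => ‖a n‖) Filter.atTop Filter.atTop
  exponent : Filter.limsup
      (fun n : ℕ => ((Real.log n / Real.log (‖a n‖) : ℝ) : EReal))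
      Filter.atTop = (α : EReal)

/-- The `n`-th factor in a Hadamard product of genus `k - 1`. -/
def hadamardFactor (k : ℕ) (w : ℂ) : ℂ :=
  (1 - w) * Complex.exp (∑ j ∈ Finset.Icc 1 (k - 1), (1 / (j : ℂ)) * w ^ j)

end

/-
Multiplication by `A` rotates sectors by `arg A`, and far from the origin the translation by `B`
barely moves arguments, since `z - B = (1 - B / z) * z` with `1 - B / z → 1`. So outside a large
disk the sector of half-width `ε / 2` around `Ψ + arg A` lies in `A • S(Ψ, ε) + B`, and it contains
no `λ n` of large modulus. The remaining `λ n` are finitely many, so only countably many directions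
in that sector point at one of them; any other direction, with a small enough opening, works.
-/

open Real Topology Bornology

lemma sector_subset_sector {Ψ ε Ψ' ε' : ℝ}
    (h : Ioo (Ψ' - ε') (Ψ' + ε') ⊆ Ioo (Ψ - ε) (Ψ + ε)) : sector Ψ' ε' ⊆ sector Ψ ε := by
  rintro z ⟨r, θ, hr, hθ, rfl⟩
  exact ⟨r, θ, hr, h hθ, rfl⟩

lemma mem_sector_iff_coe_angle {Ψ ε : ℝ} {z : ℂ} :
    z ∈ sector Ψ ε ↔ z ≠ 0 ∧ ∃ θ ∈ Ioo (Ψ - ε) (Ψ + ε), (θ : Real.Angle) = arg z := by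
  constructor
  · rintro ⟨r, θ, hr, hθ, rfl⟩
    refine ⟨mul_ne_zero (ofReal_ne_zero.2 hr.ne') (Complex.exp_ne_zero _), θ, hθ, ?_⟩
    rw [arg_real_mul _ hr, arg_exp_mul_I, Real.Angle.coe_toIocMod]
  · rintro ⟨hz, θ, hθ, hθz⟩
    refine ⟨‖z‖, θ, norm_pos_iff.2 hz, hθ, ?_⟩
    have hcos : Real.cos θ = Real.cos (arg z) := by
      rw [← Real.Angle.cos_coe, hθz, Real.Angle.cos_coe]
    have hsin : Real.sin θ = Real.sin (arg z) := by
      rw [← Real.Angle.sin_coe, hθz, Real.Angle.sin_coe]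
    rw [exp_mul_I, ← ofReal_cos, ← ofReal_sin, hcos, hsin, ofReal_cos, ofReal_sin, ← exp_mul_I,
      norm_mul_exp_arg_mul_I]

lemma sector_add_two_pi (Ψ ε : ℝ) : sector (Ψ + 2 * π) ε = sector Ψ ε := by
  ext z
  simp only [mem_sector_iff_coe_angle]
  constructor
  · rintro ⟨hz, θ, hθ, hθz⟩
    refine ⟨hz, θ - 2 * π, ⟨by linarith [hθ.1], by linarith [hθ.2]⟩, ?_⟩
    rw [Real.Angle.coe_sub, Real.Angle.coe_two_pi, sub_zero, hθz]
  · rintro ⟨hz, θ, hθ, hθz⟩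
    refine ⟨hz, θ + 2 * π, ⟨by linarith [hθ.1], by linarith [hθ.2]⟩, ?_⟩
    rw [Real.Angle.coe_add, Real.Angle.coe_two_pi, add_zero, hθz]

lemma sector_toIcoMod (Ψ ε : ℝ) :
    sector (toIcoMod two_pi_pos (-π) Ψ) ε = sector Ψ ε := by
  rw [← self_sub_toIcoDiv_zsmul]
  exact Function.Periodic.sub_zsmul_eq (f := fun Ψ => sector Ψ ε) (sector_add_two_pi · ε) _

lemma mul_mem_sector {Ψ ε : ℝ} {c z : ℂ} (hc : c ≠ 0) (hz : z ∈ sector Ψ ε) :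
    c * z ∈ sector (Ψ + arg c) ε := by
  rw [mem_sector_iff_coe_angle] at hz ⊢
  obtain ⟨hz, θ, hθ, hθz⟩ := hz
  refine ⟨mul_ne_zero hc hz, θ + arg c, ⟨by linarith [hθ.1], by linarith [hθ.2]⟩, ?_⟩
  rw [arg_mul_coe_angle hc hz, Real.Angle.coe_add, hθz, add_comm]

lemma inv_mul_mem_sector {Ψ ε : ℝ} {c z : ℂ} (hc : c ≠ 0) (hz : z ∈ sector (Ψ + arg c) ε) :
    c⁻¹ * z ∈ sector Ψ ε := by
  rw [mem_sector_iff_coe_angle] at hz ⊢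
  obtain ⟨hz, θ, hθ, hθz⟩ := hz
  refine ⟨mul_ne_zero (inv_ne_zero hc) hz, θ - arg c, ⟨by linarith [hθ.1], by linarith [hθ.2]⟩, ?_⟩
  rw [arg_mul_coe_angle (inv_ne_zero hc) hz, arg_inv_coe_angle, Real.Angle.coe_sub, hθz,
    neg_add_eq_sub]

lemma eventually_sub_mem_sector {Ψ δ ε : ℝ} (hδε : δ < ε) (B : ℂ) :
    ∀ᶠ z in cobounded ℂ, z ∈ sector Ψ δ → z - B ∈ sector Ψ ε := by
  have hu : Tendsto (fun z => 1 - B * z⁻¹) (cobounded ℂ) (𝓝 1) := by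
    simpa using (tendsto_inv₀_cobounded.const_mul B).const_sub 1
  have harg : Tendsto (fun z => arg (1 - B * z⁻¹)) (cobounded ℂ) (𝓝 0) := by
    simpa [Function.comp_def] using (continuousAt_arg one_mem_slitPlane).tendsto.comp hu
  filter_upwards [hu.eventually_ne one_ne_zero,
    harg.eventually (eventually_abs_sub_lt 0 (sub_pos.2 hδε)), eventually_ne_cobounded 0]
    with z hu0 hargz hz0 hz
  rw [sub_zero, abs_lt] at hargz
  rw [show z - B = (1 - B * z⁻¹) * z by field_simp]
  exact sector_subset_sector (Ioo_subset_Ioo (by linarith) (by linarith)) (mul_mem_sector hu0 hz)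

lemma eventually_exists_mul_add_eq_of_mem_sector {Ψ δ ε : ℝ} (hδε : δ < ε) {A : ℂ} (hA : A ≠ 0)
    (B : ℂ) : ∀ᶠ z in cobounded ℂ, z ∈ sector (Ψ + arg A) δ → ∃ w ∈ sector Ψ ε, z = A * w + B :=
  (eventually_sub_mem_sector hδε B).mono fun z h hz =>
    ⟨A⁻¹ * (z - B), inv_mul_mem_sector hA (h hz), by field_simp; ring⟩

lemma exists_pos_forall_le_norm_of_eventually_cobounded {E : Type*} [SeminormedAddCommGroup E]
    {p : E → Prop} (h : ∀ᶠ x in cobounded E, p x) : ∃ R, 0 < R ∧ ∀ x, R ≤ ‖x‖ → p x := by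
  rw [← comap_norm_atTop, (atTop_basis.comap _).eventually_iff] at h
  obtain ⟨R, -, hR⟩ := h
  exact ⟨max R 1, by positivity, fun x hx => hR (le_of_max_le_left hx)⟩

lemma tendsto_norm_mul_add_atTop {ι 𝕜 : Type*} [NormedField 𝕜] {l : Filter ι} {a : ι → 𝕜}
    (ha : Tendsto (fun i => ‖a i‖) l atTop) {A : 𝕜} (hA : A ≠ 0) (B : 𝕜) :
    Tendsto (fun i => ‖A * a i + B‖) l atTop := by
  refine tendsto_atTop_mono (fun i => ?_)
    (tendsto_atTop_add_const_right l (-‖B‖) (ha.const_mul_atTop (norm_pos_iff.2 hA)))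
  have := norm_sub_norm_le (A * a i) (-B)
  rw [norm_neg, sub_neg_eq_add, norm_mul] at this
  linarith

lemma exists_sector_forall_notMem_of_finite {F : Set ℂ} (hF : F.Finite) {a b : ℝ} (hab : a < b) :
    ∃ Ψ ε, 0 < ε ∧ Ioo (Ψ - ε) (Ψ + ε) ⊆ Ioo a b ∧ ∀ z ∈ F, z ∉ sector Ψ ε := by
  set K : Set ℝ := ⋃ z ∈ F, (↑) ⁻¹' {(arg z : Real.Angle)}
  have hK : IsClosed K := hF.isClosed_biUnion fun z _ =>
    isClosed_singleton.preimage Real.Angle.continuous_coe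
  have hKc : K.Countable := hF.countable.biUnion fun z _ =>
    (countable_range fun k : ℤ => arg z + 2 * π * k).mono fun θ hθ => by
      obtain ⟨k, hk⟩ := Real.Angle.angle_eq_iff_two_pi_dvd_sub.1 hθ
      exact ⟨k, by linarith⟩
  obtain ⟨Ψ, hΨ⟩ := (hKc.dense_compl ℝ).inter_open_nonempty _ isOpen_Ioo (nonempty_Ioo.2 hab)
  obtain ⟨ε, hε, hball⟩ := Metric.isOpen_iff.1 (isOpen_Ioo.inter hK.isOpen_compl) Ψ hΨ
  rw [Real.ball_eq_Ioo] at hball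
  refine ⟨Ψ, ε, hε, fun θ hθ => (hball hθ).1, fun z hzF hz => ?_⟩
  obtain ⟨-, θ, hθ, hθz⟩ := mem_sector_iff_coe_angle.1 hz
  exact (hball hθ).2 (mem_biUnion hzF hθz)

theorem sector_condition_of_linear_general (a : ℕ → ℂ) (ε Ψ : ℝ) (A B : ℂ)
    (htend : Filter.Tendsto (fun n => ‖a n‖) Filter.atTop Filter.atTop)
    (hε : 0 < ε)
    (hsector : ∀ n, a n ∉ sector Ψ ε)
    (hA : A ≠ 0) :
    ∃ Ψ' ∈ Set.Ico (-Real.pi) Real.pi, ∃ ε' : ℝ, 0 < ε' ∧ ∃ R : ℝ, 0 < R ∧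
      (∀ n, A * a n + B ∉ sector Ψ' ε') ∧
      (∀ z ∈ sector Ψ' ε', R ≤ ‖z‖ → ∃ w ∈ sector Ψ ε, z = A * w + B) := by
  obtain ⟨R, hR, hpre⟩ := exists_pos_forall_le_norm_of_eventually_cobounded
    (eventually_exists_mul_add_eq_of_mem_sector (Ψ := Ψ) (half_lt_self hε) hA B)
  have hsmall : {n | ¬R ≤ ‖A * a n + B‖}.Finite := eventually_cofinite.1 <|
    Nat.cofinite_eq_atTop ▸ (tendsto_norm_mul_add_atTop htend hA B).eventually_ge_atTop R
  obtain ⟨Ψ', ε', hε', hsub, havoid⟩ := exists_sector_forall_notMem_of_finite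
    (hsmall.image fun n => A * a n + B)
    (show Ψ + arg A - ε / 2 < Ψ + arg A + ε / 2 by linarith)
  have hsector' := sector_subset_sector hsub
  refine ⟨toIcoMod two_pi_pos (-π) Ψ', by
    simpa [neg_add_eq_sub, two_mul] using toIcoMod_mem_Ico two_pi_pos (-π) Ψ',
    ε', hε', R, hR, ?_, ?_⟩ <;> rw [sector_toIcoMod]
  · intro n hn
    by_cases hnR : R ≤ ‖A * a n + B‖
    · obtain ⟨w, hw, hnw⟩ := hpre _ hnR (hsector' hn)
      exact hsector n (mul_left_cancel₀ hA (add_right_cancel hnw) ▸ hw)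
    · exact havoid _ (mem_image_of_mem _ hnR) hn
  · exact fun z hz hRz => hpre z hRz (hsector' hz)

/-- **Persistence of the sector condition under linear transformations** (Lemma 4.1).
If no `a n` lies in the open sector `S(Ψ, ε)` and `λ n = A·a n + B` (with `A ≠ 0`, `λ n ≠ 0`),
then there are `Ψ′ ∈ [−π, π)`, `ε′ > 0` and `R > 0` such that no `λ n` lies in `S(Ψ′, ε′)` and,
outside the disk of radius `R`, the sector `S(Ψ′, ε′)` is contained in `A·S(Ψ, ε) + B`. -/
theorem sector_condition_of_linear (a : ℕ → ℂ) (ε Ψ : ℝ) (A B : ℂ)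
    (ha0 : ∀ n, a n ≠ 0)
    (htend : Filter.Tendsto (fun n => ‖a n‖) Filter.atTop Filter.atTop)
    (hε : 0 < ε) (hΨ : Ψ ∈ Set.Ico (-Real.pi) Real.pi)
    (hsector : ∀ n, a n ∉ sector Ψ ε)
    (hA : A ≠ 0) (hlam : ∀ n, A * a n + B ≠ 0) :
    ∃ Ψ' ∈ Set.Ico (-Real.pi) Real.pi, ∃ ε' : ℝ, 0 < ε' ∧ ∃ R : ℝ, 0 < R ∧
      (∀ n, A * a n + B ∉ sector Ψ' ε') ∧
      (∀ z ∈ sector Ψ' ε', R ≤ ‖z‖ → ∃ w ∈ sector Ψ ε, z = A * w + B) :=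
  sector_condition_of_linear_general a ε Ψ A B htend hε hsector hA
end

section
/- For every positive integer n, the Riemann zeta function satisfies ζ(2n) = (−1)^{n+1}·n·π^{2n}/(2n+1)! + ∑_{ℓ=1}^{n−1} (−1)^{n−ℓ+1}·(π^{2(n−ℓ)}/(2(n−ℓ)+1)!)·ζ(2ℓ). -/
/-!
Euler's formula `ζ(2ℓ) = (-1)^(ℓ+1) (2π)^(2ℓ) B_{2ℓ} / (2 (2ℓ)!)` also holds for `ℓ = 0`, where
`ζ(0) = -1/2`. Substituting it, and adding the terms `ℓ = 0` and `ℓ = n` to the sum, turns the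
recursion into `∑_{ℓ ≤ n} C(2n+1, 2ℓ) 2^(2ℓ) B_{2ℓ} = 2n + 1`. Up to the contribution of `B_1`,
this is `2^(2n+1) B_{2n+1}(1/2) = 0`, which holds because `B_m(1 - x) = (-1)^m B_m(x)`.
-/

open Finset Nat

theorem Polynomial.bernoulli_eval_one_half_of_odd {n : ℕ} (hn : Odd n) :
    (Polynomial.bernoulli n).eval (1 / 2) = 0 := by
  have h := bernoulli_eval_one_sub n (1 / 2)
  rw [hn.neg_one_pow] at h
  norm_num at h
  linarith

theorem sum_choose_mul_two_pow_mul_bernoulli_of_odd {n : ℕ} (hn : Odd n) :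
    ∑ k ∈ range (n + 1), (n.choose k : ℚ) * 2 ^ k * bernoulli k = 0 := by
  have h := congrArg (2 ^ n * ·) (Polynomial.bernoulli_eval_one_half_of_odd hn)
  simp only [Polynomial.bernoulli, Polynomial.eval_finsetSum, Polynomial.eval_monomial,
    mul_sum, mul_zero] at h
  rw [← h]
  refine sum_congr rfl fun k hk => ?_
  obtain ⟨j, rfl⟩ := Nat.exists_eq_add_of_le (mem_range_succ_iff.mp hk)
  rw [Nat.add_sub_cancel_left, pow_add, one_div, inv_pow]
  field_simp

theorem Finset.sum_range_two_mul {M : Type*} [AddCommMonoid M] (f : ℕ → M) (n : ℕ) :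
    ∑ k ∈ range (2 * n), f k = ∑ i ∈ range n, (f (2 * i) + f (2 * i + 1)) := by
  induction n with
  | zero => simp
  | succ n ih => rw [mul_add_one, sum_range_succ, sum_range_succ, sum_range_succ, ih, add_assoc]

theorem sum_choose_two_mul_mul_two_pow_mul_bernoulli (n : ℕ) :
    ∑ ℓ ∈ range (n + 1), ((2 * n + 1).choose (2 * ℓ) : ℚ) * 2 ^ (2 * ℓ) * bernoulli (2 * ℓ)
      = 2 * n + 1 := by
  have h := sum_choose_mul_two_pow_mul_bernoulli_of_odd (odd_two_mul_add_one n)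
  rw [show 2 * n + 1 + 1 = 2 * (n + 1) by ring, sum_range_two_mul, sum_add_distrib] at h
  have hodd : ∑ i ∈ range (n + 1),
      ((2 * n + 1).choose (2 * i + 1) : ℚ) * 2 ^ (2 * i + 1) * bernoulli (2 * i + 1)
        = -(2 * n + 1) := by
    rw [sum_range_succ']
    simp [bernoulli_eq_zero_of_odd (odd_two_mul_add_one _), bernoulli_one]
    ring
  linarith

-- The coefficient of `x^(2n)` in `x coth x * (sinh x / x) = cosh x`, as
-- `x coth x = ∑ 2^(2ℓ) B_{2ℓ} x^(2ℓ) / (2ℓ)!`.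
theorem sum_two_pow_mul_bernoulli_div_factorial_mul_factorial (n : ℕ) :
    ∑ ℓ ∈ range (n + 1), (2 : ℚ) ^ (2 * ℓ) * bernoulli (2 * ℓ) / ((2 * ℓ)! * (2 * (n - ℓ) + 1)!)
      = 1 / (2 * n)! := by
  calc _ = ∑ ℓ ∈ range (n + 1),
          ((2 * n + 1).choose (2 * ℓ) : ℚ) * 2 ^ (2 * ℓ) * bernoulli (2 * ℓ) / (2 * n + 1)! := by
        refine sum_congr rfl fun ℓ hℓ => ?_
        have hℓ : ℓ ≤ n := mem_range_succ_iff.mp hℓ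
        rw [Nat.cast_choose ℚ (by omega), show 2 * n + 1 - 2 * ℓ = 2 * (n - ℓ) + 1 by omega]
        field_simp
    _ = (2 * n + 1) / (2 * n + 1)! := by
        rw [← sum_div, sum_choose_two_mul_mul_two_pow_mul_bernoulli]
    _ = 1 / (2 * n)! := by
        rw [factorial_succ]
        push_cast
        field_simp

theorem riemannZeta_two_mul_nat_eq_div_two (k : ℕ) :
    riemannZeta (2 * k) = (-1) ^ (k + 1) * (Real.pi : ℂ) ^ (2 * k)
      * ((2 ^ (2 * k) * bernoulli (2 * k) / (2 * k)! : ℚ) : ℂ) / 2 := by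
  rw [riemannZeta_two_mul_nat', zpow_sub_one₀ two_ne_zero, ← Nat.cast_ofNat (R := ℤ),
    ← Nat.cast_mul, zpow_natCast]
  push_cast
  ring

theorem sum_range_neg_one_pow_mul_riemannZeta_two_mul (n : ℕ) :
    ∑ ℓ ∈ range (n + 1), (-1 : ℂ) ^ (n - ℓ + 1) *
        ((Real.pi : ℂ) ^ (2 * (n - ℓ)) / ((2 * (n - ℓ) + 1)! : ℂ)) * riemannZeta (2 * ℓ)
      = (-1) ^ n * (Real.pi : ℂ) ^ (2 * n) / 2 * ((1 / (2 * n)! : ℚ) : ℂ) := by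
  have hterm : ∀ ℓ ∈ range (n + 1), (-1 : ℂ) ^ (n - ℓ + 1) *
        ((Real.pi : ℂ) ^ (2 * (n - ℓ)) / ((2 * (n - ℓ) + 1)! : ℂ)) * riemannZeta (2 * ℓ)
      = (-1) ^ n * (Real.pi : ℂ) ^ (2 * n) / 2
        * ((2 ^ (2 * ℓ) * bernoulli (2 * ℓ) / ((2 * ℓ)! * (2 * (n - ℓ) + 1)!) : ℚ) : ℂ) := by
    intro ℓ hℓ
    obtain ⟨k, rfl⟩ := Nat.exists_eq_add_of_le (mem_range_succ_iff.mp hℓ)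
    rw [Nat.add_sub_cancel_left, riemannZeta_two_mul_nat_eq_div_two]
    push_cast
    ring
  rw [sum_congr rfl hterm, ← mul_sum, ← Rat.cast_sum,
    sum_two_pow_mul_bernoulli_div_factorial_mul_factorial]

/-- **Recursion for the Riemann zeta function at even positive integers** (Section 5.1).
For every positive integer `n`,
`ζ(2n) = (−1)^{n+1}·n·π^{2n}/(2n+1)! + ∑_{ℓ=1}^{n−1} (−1)^{n−ℓ+1}·(π^{2(n−ℓ)}/(2(n−ℓ)+1)!)·ζ(2ℓ)`. -/
theorem riemannZeta_two_mul_recursion (n : ℕ) (hn : 1 ≤ n) :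
    riemannZeta (2 * n) =
      (-1 : ℂ) ^ (n + 1) * (n : ℂ) * (Real.pi : ℂ) ^ (2 * n) /
          (Nat.factorial (2 * n + 1) : ℂ) +
        ∑ ℓ ∈ Finset.Icc 1 (n - 1),
          (-1 : ℂ) ^ (n - ℓ + 1) *
            ((Real.pi : ℂ) ^ (2 * (n - ℓ)) / (Nat.factorial (2 * (n - ℓ) + 1) : ℂ)) *
            riemannZeta (2 * ℓ) := by
  obtain ⟨m, rfl⟩ := Nat.exists_eq_add_of_le' hn
  have hsum := sum_range_neg_one_pow_mul_riemannZeta_two_mul (m + 1)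
  rw [sum_range_succ, sum_range_eq_add_Ico _ (by omega), Ico_add_one_right_eq_Icc] at hsum
  simp only [Nat.sub_zero, Nat.sub_self, Nat.cast_zero, mul_zero, zero_add, pow_zero, pow_one,
    factorial_one, Nat.cast_one, div_one, riemannZeta_zero] at hsum
  rw [Nat.add_sub_cancel]
  generalize (∑ ℓ ∈ Icc 1 m, _ : ℂ) = S at hsum ⊢
  rw [factorial_succ (2 * (m + 1))] at hsum ⊢
  push_cast at hsum ⊢
  have hfac : ((2 * (m + 1))! : ℂ) ≠ 0 := mod_cast factorial_ne_zero _
  have hodd : (2 * ((m : ℂ) + 1) + 1) ≠ 0 := by norm_cast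
  field_simp at hsum ⊢
  linear_combination (-1 / 2 : ℂ) * hsum
end
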